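/- Let $H$ be a finite abelian group and $\psi \in Z^2(H, k^\times)$ a 2-cocycle over an algebraically closed field $k$ of characteristic zero. Let $R = \{h \in H : \xi_\psi(h, x) = 1 \text{ for all } x \in H\}$ be the radical of the alternating form $\xi_\psi(a,b) = \psi(a,b)/\psi(b,a)$. Then the cohomology class of $\psi$ is the inflation of a cohomology class $\bar\psi \in H^2(H/R, k^\times)$ along the quotient map $H \to H/R$. -/
import Mathlib

section AuxSplit

universe u v

/-- Type synonym for the central extension of `G` by `A` determined by a 2-cocycle `f`. -/
def TwProd (A : Type u) (G : Type v) (_f : G → G → A) : Type max u v := A × G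

variable {A : Type u} {G : Type v} [CommGroup A] [CommGroup G]

theorem tw_one_left (f : G → G → A)
    (hf : ∀ a b c : G, f a b * f (a * b) c = f b c * f a (b * c)) (c : G) :
    f 1 c = f 1 1 := by
  have h := hf 1 1 c
  rw [one_mul, one_mul] at h
  exact (mul_right_cancel h).symm

/-- The commutative group structure on `TwProd A G f` for a symmetric cocycle `f`. -/
def twCommGroup (f : G → G → A)
    (hf : ∀ a b c : G, f a b * f (a * b) c = f b c * f a (b * c))
    (hs : ∀ a b : G, f a b = f b a) : CommGroup (TwProd A G f) where
  mul p q := (p.1 * q.1 * f p.2 q.2, p.2 * q.2)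
  one := ((f 1 1)⁻¹, 1)
  inv p := (p.1⁻¹ * (f 1 1)⁻¹ * (f p.2⁻¹ p.2)⁻¹, p.2⁻¹)
  mul_assoc p q r := by
    refine Prod.ext ?_ (mul_assoc _ _ _)
    show p.1 * q.1 * f p.2 q.2 * r.1 * f (p.2 * q.2) r.2
        = p.1 * (q.1 * r.1 * f q.2 r.2) * f p.2 (q.2 * r.2)
    have h := hf p.2 q.2 r.2
    calc p.1 * q.1 * f p.2 q.2 * r.1 * f (p.2 * q.2) r.2
        = (p.1 * (q.1 * r.1)) * (f p.2 q.2 * f (p.2 * q.2) r.2) := by ac_rfl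
      _ = (p.1 * (q.1 * r.1)) * (f q.2 r.2 * f p.2 (q.2 * r.2)) := by rw [h]
      _ = p.1 * (q.1 * r.1 * f q.2 r.2) * f p.2 (q.2 * r.2) := by ac_rfl
  one_mul p := by
    refine Prod.ext ?_ (one_mul _)
    show (f 1 1)⁻¹ * p.1 * f 1 p.2 = p.1
    rw [tw_one_left f hf p.2, mul_right_comm, inv_mul_cancel, one_mul]
  mul_one p := by
    refine Prod.ext ?_ (mul_one _)
    show p.1 * (f 1 1)⁻¹ * f p.2 1 = p.1
    rw [hs p.2 1, tw_one_left f hf p.2, inv_mul_cancel_right]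
  inv_mul_cancel p := by
    refine Prod.ext ?_ (inv_mul_cancel _)
    show p.1⁻¹ * (f 1 1)⁻¹ * (f p.2⁻¹ p.2)⁻¹ * p.1 * f p.2⁻¹ p.2 = (f 1 1)⁻¹
    calc p.1⁻¹ * (f 1 1)⁻¹ * (f p.2⁻¹ p.2)⁻¹ * p.1 * f p.2⁻¹ p.2
        = (p.1⁻¹ * p.1) * (((f p.2⁻¹ p.2)⁻¹ * f p.2⁻¹ p.2) * (f 1 1)⁻¹) := by ac_rfl
      _ = (f 1 1)⁻¹ := by rw [inv_mul_cancel, inv_mul_cancel, one_mul, one_mul]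
  mul_comm p q := by
    refine Prod.ext ?_ (mul_comm _ _)
    show p.1 * q.1 * f p.2 q.2 = q.1 * p.1 * f q.2 p.2
    rw [hs q.2 p.2]
    ac_rfl

/-- A divisible group written additively. -/
noncomputable def divisibleAdditive (B : Type*) [Group B] [RootableBy B ℤ] :
    DivisibleBy (Additive B) ℤ where
  div a n := Additive.ofMul (RootableBy.root a.toMul n)
  div_zero a := congrArg Additive.ofMul (RootableBy.root_zero _)
  div_cancel a hn := by
    apply Additive.toMul.injective
    rw [toMul_zsmul]
    exact RootableBy.root_cancel _ hn

/-- A symmetric 2-cocycle on a commutative group with values in a divisible commutative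
group is a coboundary. -/
theorem exists_split {A : Type u} {G : Type v} [CommGroup A] [CommGroup G] [RootableBy A ℤ]
    (f : G → G → A) (hf : ∀ a b c : G, f a b * f (a * b) c = f b c * f a (b * c))
    (hs : ∀ a b : G, f a b = f b a) :
    ∃ g : G → A, ∀ r s : G, f r s = g r * g s * (g (r * s))⁻¹ := by
  letI : CommGroup (TwProd A G f) := twCommGroup f hf hs
  -- the central embedding of `A`
  have mul_def : ∀ p q : TwProd A G f, p * q = (p.1 * q.1 * f p.2 q.2, p.2 * q.2) :=
    fun _ _ => rfl
  have one_def : (1 : TwProd A G f) = ((f 1 1)⁻¹, 1) := rfl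
  let i : A →* TwProd A G f :=
    { toFun := fun t => (t * (f 1 1)⁻¹, (1 : G))
      map_one' := by
        rw [one_def]
        exact Prod.ext (one_mul _) rfl
      map_mul' := fun s t => by
        refine Prod.ext ?_ (one_mul (1 : G)).symm
        show s * t * (f 1 1)⁻¹ = s * (f 1 1)⁻¹ * (t * (f 1 1)⁻¹) * f 1 1
        refine Eq.symm ?_
        calc s * (f 1 1)⁻¹ * (t * (f 1 1)⁻¹) * f 1 1
            = (s * t * (f 1 1)⁻¹) * ((f 1 1)⁻¹ * f 1 1) := by ac_rfl
          _ = s * t * (f 1 1)⁻¹ := by rw [inv_mul_cancel, mul_one] }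
  have hiinj : Function.Injective i := by
    intro s t h
    have h1 : s * (f 1 1)⁻¹ = t * (f 1 1)⁻¹ := congrArg Prod.fst h
    exact mul_right_cancel h1
  -- injectivity of `A` as a `ℤ`-module
  letI : DivisibleBy (Additive (ULift.{v} A)) ℤ := divisibleAdditive _
  haveI hInj : Module.Injective ℤ (Additive (ULift.{v} A)) :=
    (Module.Baer.of_divisible _).injective
  let j : ULift.{v} A →* TwProd A G f := i.comp MulEquiv.ulift.toMonoidHom
  have hjinj : Function.Injective j := hiinj.comp MulEquiv.ulift.injective
  let flin : Additive (ULift.{v} A) →ₗ[ℤ] Additive (TwProd A G f) :=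
    (MonoidHom.toAdditive j).toIntLinearMap
  have hflin : Function.Injective flin := hjinj
  obtain ⟨hmap, hh⟩ := hInj.out flin hflin LinearMap.id
  let ρ : TwProd A G f → A := fun c => (Additive.toMul (hmap (Additive.ofMul c))).down
  have hρi : ∀ t : A, ρ (i t) = t := by
    intro t
    show (Additive.toMul (hmap (Additive.ofMul (i t)))).down = t
    rw [show (Additive.ofMul (i t)) = flin (Additive.ofMul (ULift.up t)) from rfl, hh]
    rfl
  have hρmul : ∀ c d : TwProd A G f, ρ (c * d) = ρ c * ρ d := by
    intro c d
    show (Additive.toMul (hmap (Additive.ofMul (c * d)))).down = _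
    rw [show Additive.ofMul (c * d) = Additive.ofMul c + Additive.ofMul d from rfl,
      map_add]
    rfl
  let e : G → TwProd A G f := fun r => ((1 : A), r)
  refine ⟨fun r => ρ (e r), fun r s => ?_⟩
  have key : e r * e s = i (f r s) * e (r * s) := by
    refine Prod.ext ?_ (one_mul (r * s)).symm
    show (1 : A) * 1 * f r s = f r s * (f 1 1)⁻¹ * 1 * f 1 (r * s)
    rw [one_mul, one_mul, mul_one, tw_one_left f hf (r * s), inv_mul_cancel_right]
  have h1 := congrArg ρ key
  rw [hρmul, hρmul, hρi] at h1
  rw [h1, mul_inv_cancel_right]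

/-- In a commutative group, a little rearrangement identity. -/
theorem comm_aux {G : Type*} [CommGroup G] (x y z a b : G) :
    (z⁻¹ * (x * y)) * ((x⁻¹ * a) * (y⁻¹ * b)) = z⁻¹ * (a * b) := by
  calc (z⁻¹ * (x * y)) * ((x⁻¹ * a) * (y⁻¹ * b))
      = z⁻¹ * ((x * (x⁻¹ * a)) * (y * (y⁻¹ * b))) := by ac_rfl
    _ = z⁻¹ * (a * b) := by rw [mul_inv_cancel_left, mul_inv_cancel_left]

end AuxSplit

/-- A 2-cocycle `ψ` on a finite abelian group `H` is, up to coboundary,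
the inflation of a 2-cocycle on `H/R`, where `R` is the radical of the alternating
form `ξ_ψ`. -/
theorem cocycle_is_inflation_from_quotient_by_radical
    {H : Type*} [CommGroup H] [Fintype H]
    {k : Type*} [Field k] [IsAlgClosed k] [CharZero k]
    (ψ : H → H → kˣ)
    (hψ : ∀ a b c, ψ a b * ψ (a * b) c = ψ b c * ψ a (b * c))
    (R : Subgroup H)
    (hR : ∀ h : H, h ∈ R ↔ ∀ x : H, ψ h x = ψ x h) :
    ∃ (ψb : H ⧸ R → H ⧸ R → kˣ) (φ : H → kˣ),
      (∀ a b c : H ⧸ R, ψb a b * ψb (a * b) c = ψb b c * ψb a (b * c)) ∧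
      (∀ a b : H, ψ a b = φ a * φ b * (φ (a * b))⁻¹ * ψb (a : H ⧸ R) (b : H ⧸ R)) := by
  classical
  haveI : RootableBy kˣ ℕ := rootableByOfPowLeftSurj _ _ (fun {n} hn x => by
    obtain ⟨y, hy⟩ := IsAlgClosed.exists_pow_nat_eq (x : k) (Nat.pos_of_ne_zero hn)
    have hy0 : y ≠ 0 := by
      intro h0
      exact x.ne_zero (by rw [← hy, h0, zero_pow hn])
    exact ⟨Units.mk0 y hy0, Units.ext (by simp [hy])⟩)
  haveI : RootableBy kˣ ℤ := Group.rootableByIntOfRootableByNat kˣ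
  obtain ⟨g, hg⟩ := exists_split (A := kˣ) (G := ↥R) (fun r s => ψ r s)
    (fun a b c => by push_cast; exact hψ a b c)
    (fun a b => (hR a).mp a.2 b)
  set g' : H → kˣ := fun h => if hh : h ∈ R then g ⟨h, hh⟩ else 1 with hg'def
  have hg' : ∀ u v : H, u ∈ R → v ∈ R → ψ u v = g' u * g' v * (g' (u * v))⁻¹ := by
    intro u v hu hv
    simp only [hg'def]
    rw [dif_pos hu, dif_pos hv, dif_pos (mul_mem hu hv)]
    exact hg ⟨u, hu⟩ ⟨v, hv⟩
  set l : H ⧸ R → H := fun q => Quotient.out q with hldef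
  have hl : ∀ q : H ⧸ R, ((l q : H) : H ⧸ R) = q := fun q => Quotient.out_eq q
  have memr : ∀ c : H, (l ↑c)⁻¹ * c ∈ R := fun c => (QuotientGroup.eq).mp (hl ↑c)
  set Φ : H → kˣ := fun c => g' ((l ↑c)⁻¹ * c) * (ψ (l ↑c) ((l ↑c)⁻¹ * c))⁻¹ with hΦ
  set Ψb : H ⧸ R → H ⧸ R → kˣ := fun p q =>
    ψ (l p) (l q) * (ψ (l (p * q)) ((l (p * q))⁻¹ * (l p * l q)))⁻¹ *
      g' ((l (p * q))⁻¹ * (l p * l q)) with hΨb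
  have main : ∀ a b : H, ψ a b = Φ a * Φ b * (Φ (a * b))⁻¹ * Ψb ↑a ↑b := by
    intro a b
    simp only [hΦ, hΨb, ← QuotientGroup.mk_mul]
    set x := l ↑a with hxeq
    set y := l ↑b with hyeq
    set z := l ↑(a * b) with hzeq
    set ra := x⁻¹ * a with hraeq
    set rb := y⁻¹ * b with hrbeq
    set rab := z⁻¹ * (a * b) with hrabeq
    set ρH := z⁻¹ * (x * y) with hρeq
    have hram : ra ∈ R := memr a
    have hrbm : rb ∈ R := memr b
    have hrabm : rab ∈ R := memr (a * b)
    have hρm : ρH ∈ R := by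
      rw [hρeq]
      refine (QuotientGroup.eq).mp ?_
      rw [hzeq, hl, QuotientGroup.mk_mul, QuotientGroup.mk_mul, hxeq, hyeq, hl, hl]
    have hxa : x * ra = a := by rw [hraeq]; exact mul_inv_cancel_left x a
    have hyb : y * rb = b := by rw [hrbeq]; exact mul_inv_cancel_left y b
    have hz' : x * y = z * ρH := by rw [hρeq]; exact (mul_inv_cancel_left z (x * y)).symm
    have hrabE : ρH * (ra * rb) = rab := by
      rw [hρeq, hraeq, hrbeq, hrabeq]; exact comm_aux x y z a b
    have I1 := hψ x ra (y * rb)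
    have I2 := hψ y rb ra
    have I3 := hψ x y (ra * rb)
    have I4 := hψ z ρH (ra * rb)
    rw [mul_left_comm ra y rb, hxa, hyb] at I1
    rw [(hR ra).mp hram b] at I1
    rw [hyb, mul_comm rb ra, (hR rb).mp hrbm ra] at I2
    rw [hz'] at I3
    rw [hrabE] at I4
    have hg1 : ψ ra rb * g' (ra * rb) = g' ra * g' rb := by
      rw [hg' ra rb hram hrbm, inv_mul_cancel_right]
    have hg2 : ψ ρH (ra * rb) * g' rab = g' ρH * g' (ra * rb) := by
      have h := hg' ρH (ra * rb) hρm (mul_mem hram hrbm)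
      rw [hrabE] at h
      rw [h, inv_mul_cancel_right]
    -- pass to `k`
    have I1k := congrArg Units.val I1
    have I2k := congrArg Units.val I2
    have I3k := congrArg Units.val I3
    have I4k := congrArg Units.val I4
    have hg1k := congrArg Units.val hg1
    have hg2k := congrArg Units.val hg2
    push_cast at I1k I2k I3k I4k hg1k hg2k
    have KEYK : (ψ a b : k) * ψ x ra * ψ y rb * g' rab * ψ z ρH
        = g' ra * g' rb * ψ z rab * ψ x y * g' ρH := by
      linear_combination ((ψ y rb : k) * g' rab * ψ z ρH) * I1k
        + ((ψ x (y * (ra * rb)) : k) * g' rab * ψ z ρH) * I2k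
        - ((g' rab : k) * ψ z ρH * ψ ra rb) * I3k
        + ((g' rab : k) * ψ ra rb * ψ x y) * I4k
        + ((ψ ra rb : k) * ψ x y * ψ z rab) * hg2k
        + ((ψ x y : k) * ψ z rab * g' ρH) * hg1k
    rw [Units.ext_iff]
    push_cast
    field_simp
    linear_combination KEYK
  have main' : ∀ a b : H, ψ a b * Φ (a * b) = Φ a * Φ b * Ψb ↑a ↑b := by
    intro a b
    rw [main a b, mul_right_comm, inv_mul_cancel_right]
  refine ⟨Ψb, Φ, ?_, main⟩
  intro p q s
  obtain ⟨a, rfl⟩ := QuotientGroup.mk_surjective p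
  obtain ⟨b, rfl⟩ := QuotientGroup.mk_surjective q
  obtain ⟨c, rfl⟩ := QuotientGroup.mk_surjective s
  simp only [← QuotientGroup.mk_mul]
  have m1 := main' a b
  have m2 := main' (a * b) c
  have m3 := main' b c
  have m4 := main' a (b * c)
  rw [← mul_assoc a b c] at m4
  have hc := hψ a b c
  have m1k := congrArg Units.val m1
  have m2k := congrArg Units.val m2
  have m3k := congrArg Units.val m3
  have m4k := congrArg Units.val m4
  have hck := congrArg Units.val hc
  push_cast at m1k m2k m3k m4k hck
  have big : (Ψb ↑a ↑b * Ψb ↑(a * b) ↑c) * (Φ a * Φ b * Φ c * Φ (a * b) * Φ (b * c))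
      = (Ψb ↑b ↑c * Ψb ↑a ↑(b * c)) * (Φ a * Φ b * Φ c * Φ (a * b) * Φ (b * c)) := by
    refine Units.ext ?_
    push_cast
    linear_combination (-((Ψb ↑(a*b) ↑c : k) * Φ c * Φ (a*b) * Φ (b*c))) * m1k
      + (-((ψ a b : k) * Φ (a*b) * Φ (b*c))) * m2k
      + ((Ψb ↑a ↑(b*c) : k) * Φ a * Φ (a*b) * Φ (b*c)) * m3k
      + ((ψ b c : k) * Φ (a*b) * Φ (b*c)) * m4k
      + ((Φ (a*b) : k) * Φ (b*c) * Φ (a*b*c)) * hck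
  exact mul_right_cancel big
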